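/- The 4-dimensional superalgebra M with basis {ε; a₁, a₂, a₃} (ε even, a_i odd), nonzero products [a₁,a₂] = ε and ε·a₁ = μa₃, and structure maps α(ε) = ε, β(a₁) = μa₁, β(a₂) = μ⁻¹a₂, β(a₃) = μa₃, is a Hom-Lie antialgebra for any nonzero scalar μ. -/
import Mathlib


/-- A Hom-Lie antialgebra over a field `k` of characteristic zero:
even part `A0` with commutative product `mul`, action `act` of `A0` on the
odd part `A1`, skew bracket `br` on `A1` valued in `A0`, and structure maps
`a = α`, `b = β` satisfying the four Hom-Lie antialgebra axioms. -/
structure HLA (k : Type*) [Field k] [CharZero k]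
    (A0 A1 : Type*) [AddCommGroup A0] [Module k A0]
    [AddCommGroup A1] [Module k A1] where
  mul : A0 →ₗ[k] A0 →ₗ[k] A0
  act : A0 →ₗ[k] A1 →ₗ[k] A1
  br : A1 →ₗ[k] A1 →ₗ[k] A0
  a : A0 →ₗ[k] A0
  b : A1 →ₗ[k] A1
  mul_comm' : ∀ x y, mul x y = mul y x
  br_skew : ∀ y z, br y z = - br z y
  ax1 : ∀ x1 x2 x3, mul (a x1) (mul x2 x3) = mul (mul x1 x2) (a x3)
  ax2 : ∀ x1 x2 y1, act (a x1) (act x2 y1) = (2⁻¹ : k) • act (mul x1 x2) (b y1)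
  ax3 : ∀ x1 y1 y2, mul (a x1) (br y1 y2) = br (act x1 y1) (b y2) + br (b y1) (act x1 y2)
  ax4 : ∀ y1 y2 y3,
    act (br y2 y3) (b y1) + act (br y3 y1) (b y2) + act (br y1 y2) (b y3) = 0

/-- The 4-dimensional superalgebra `M` with basis `{ε; a₁, a₂, a₃}` (`ε` even,
`aᵢ` odd), nonzero products `[a₁,a₂] = ε` and `ε·a₁ = μa₃` (all other products
zero), and structure maps `α(ε) = ε`, `β(a₁) = μa₁`, `β(a₂) = μ⁻¹a₂`,
`β(a₃) = μa₃`, is a Hom-Lie antialgebra for any nonzero scalar `μ`.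
The even part is `k·ε ≅ k`, the odd part is `k·a₁ ⊕ k·a₂ ⊕ k·a₃ ≅ k × k × k`. -/
theorem fourDim_example_is_HomLieAntialgebra
    (k : Type*) [Field k] [CharZero k] (μ : k) (hμ : μ ≠ 0) :
    ∃ L : HLA k k (k × k × k),
      (∀ x y : k, L.mul x y = 0) ∧
      (∀ (x : k) (p : k × k × k), L.act x p = (0, 0, μ * (x * p.1))) ∧
      (∀ p q : k × k × k, L.br p q = p.1 * q.2.1 - p.2.1 * q.1) ∧
      (∀ x : k, L.a x = x) ∧
      (∀ p : k × k × k, L.b p = (μ * p.1, μ⁻¹ * p.2.1, μ * p.2.2)) := by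
  refine ⟨{
    mul := 0
    act := LinearMap.mk₂ k (fun x p => (0, 0, μ * (x * p.1)))
      (by intros; simp [add_mul, mul_add]) (by intros; simp [Prod.smul_mk]; try ring)
      (by intros; simp [mul_add]; try ring) (by intros; simp [Prod.smul_mk]; try ring)
    br := LinearMap.mk₂ k (fun p q => p.1 * q.2.1 - p.2.1 * q.1)
      (by intros; simp; ring) (by intros; simp; ring)
      (by intros; simp; ring) (by intros; simp; ring)
    a := LinearMap.id
    b := LinearMap.prodMap (μ • LinearMap.id)
      (LinearMap.prodMap (μ⁻¹ • LinearMap.id) (μ • LinearMap.id))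
    mul_comm' := by intros; rfl
    br_skew := by intros; simp [LinearMap.mk₂_apply]; ring
    ax1 := by intros; rfl
    ax2 := by intros; simp [LinearMap.mk₂_apply, Prod.ext_iff]
    ax3 := by intro x1 y1 y2; simp [LinearMap.mk₂_apply]
    ax4 := by intro y1 y2 y3; simp [LinearMap.mk₂_apply, Prod.ext_iff]; ring }, ?_, ?_, ?_, ?_, ?_⟩
  · intros; rfl
  · intros; rfl
  · intros; rfl
  · intros; rfl
  · intro p; simp [Prod.ext_iff, mul_comm]
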